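/- arXiv:1302.5974 — 5 statements merged into one kernel-verified Lean document; each statement's English description precedes it below -/
import Mathlib

section
/- Let W_mid be a real symmetric n×n matrix and ΔW a symmetric n×n matrix with nonnegative entries. If the spectral radius ρ(ΔW) satisfies ρ(ΔW) ≤ λ_min(W_mid), where λ_min(W_mid) is the minimum eigenvalue of W_mid, then every symmetric matrix W with |W_{ij} − (W_mid)_{ij}| ≤ (ΔW)_{ij} for all i,j is positive semidefinite. -/
/-!
Write `x ⬝ᵥ W *ᵥ x = x ⬝ᵥ Wmid *ᵥ x + x ⬝ᵥ (W - Wmid) *ᵥ x`. Diagonalising `Wmid` bounds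
the first term below by `λ_min(Wmid) ‖x‖²`. The entrywise bound `|W - Wmid| ≤ ΔW` bounds
the second term in absolute value by `|x| ⬝ᵥ ΔW *ᵥ |x|`, which diagonalising `ΔW` bounds
by `ρ(ΔW) ‖|x|‖²`, and `‖|x|‖ = ‖x‖`. Hence `x ⬝ᵥ W *ᵥ x ≥ (λ_min(Wmid) - ρ(ΔW)) ‖x‖² ≥ 0`.
-/

open Matrix

namespace Matrix.IsHermitian

variable {ι : Type*} [Fintype ι] [DecidableEq ι] {A : Matrix ι ι ℝ} (hA : A.IsHermitian)

theorem dotProduct_mulVec_eq_sum_eigenvalues (x : ι → ℝ) :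
    x ⬝ᵥ A *ᵥ x =
      ∑ i, hA.eigenvalues i * (star (hA.eigenvectorUnitary : Matrix ι ι ℝ) *ᵥ x) i ^ 2 := by
  set U : Matrix ι ι ℝ := (hA.eigenvectorUnitary : Matrix ι ι ℝ)
  have hxU : x ᵥ* U = star U *ᵥ x := by
    rw [star_eq_conjTranspose, conjTranspose_eq_transpose_of_trivial, ← vecMul_transpose,
      transpose_transpose]
  conv_lhs => rw [hA.spectral_theorem, Unitary.conjStarAlgAut_apply]
  rw [← mulVec_mulVec, ← mulVec_mulVec, dotProduct_mulVec, hxU]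
  simp [dotProduct, mulVec_diagonal, sq, mul_left_comm, U]

theorem dotProduct_self_star_eigenvectorUnitary_mulVec (x : ι → ℝ) :
    (star (hA.eigenvectorUnitary : Matrix ι ι ℝ) *ᵥ x) ⬝ᵥ
      (star (hA.eigenvectorUnitary : Matrix ι ι ℝ) *ᵥ x) = x ⬝ᵥ x := by
  set U : Matrix ι ι ℝ := (hA.eigenvectorUnitary : Matrix ι ι ℝ)
  have hUU : U * star U = 1 := mem_unitaryGroup_iff.mp hA.eigenvectorUnitary.2
  rw [dotProduct_mulVec, star_eq_conjTranspose, conjTranspose_eq_transpose_of_trivial,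
    vecMul_transpose, mulVec_mulVec, ← conjTranspose_eq_transpose_of_trivial,
    ← star_eq_conjTranspose, hUU, one_mulVec]

theorem mul_dotProduct_self_le_dotProduct_mulVec {c : ℝ} (hc : ∀ i, c ≤ hA.eigenvalues i)
    (x : ι → ℝ) : c * (x ⬝ᵥ x) ≤ x ⬝ᵥ A *ᵥ x := by
  rw [hA.dotProduct_mulVec_eq_sum_eigenvalues,
    ← hA.dotProduct_self_star_eigenvectorUnitary_mulVec, dotProduct, Finset.mul_sum]
  refine Finset.sum_le_sum fun i _ => ?_
  rw [← sq]
  exact mul_le_mul_of_nonneg_right (hc i) (sq_nonneg _)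

theorem dotProduct_mulVec_le_mul_dotProduct_self {c : ℝ} (hc : ∀ i, hA.eigenvalues i ≤ c)
    (x : ι → ℝ) : x ⬝ᵥ A *ᵥ x ≤ c * (x ⬝ᵥ x) := by
  rw [hA.dotProduct_mulVec_eq_sum_eigenvalues,
    ← hA.dotProduct_self_star_eigenvectorUnitary_mulVec, dotProduct, Finset.mul_sum]
  refine Finset.sum_le_sum fun i _ => ?_
  rw [← sq]
  exact mul_le_mul_of_nonneg_right (hc i) (sq_nonneg _)

end Matrix.IsHermitian

theorem Matrix.abs_dotProduct_mulVec_le {ι R : Type*} [Fintype ι] [Ring R] [LinearOrder R]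
    [IsStrictOrderedRing R] {E Δ : Matrix ι ι R} (h : ∀ i j, |E i j| ≤ Δ i j) (x : ι → R) :
    |x ⬝ᵥ E *ᵥ x| ≤ |x| ⬝ᵥ Δ *ᵥ |x| := by
  simp only [dotProduct, mulVec, Finset.mul_sum]
  refine (Finset.abs_sum_le_sum_abs _ _).trans (Finset.sum_le_sum fun i _ => ?_)
  refine (Finset.abs_sum_le_sum_abs _ _).trans (Finset.sum_le_sum fun j _ => ?_)
  rw [abs_mul, abs_mul, Pi.abs_apply, Pi.abs_apply]
  gcongr
  exact h i j

theorem Matrix.abs_dotProduct_abs {ι R : Type*} [Fintype ι] [Ring R] [LinearOrder R]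
    (x : ι → R) : |x| ⬝ᵥ |x| = x ⬝ᵥ x :=
  Finset.sum_congr rfl fun i _ => abs_mul_abs_self (x i)

theorem interval_matrix_posSemidef_general {n : ℕ}
    (Wmid ΔW : Matrix (Fin n) (Fin n) ℝ)
    (hWmid : Wmid.IsHermitian) (hΔ : ΔW.IsHermitian)
    (hρ : (⨆ i, |hΔ.eigenvalues i|) ≤ ⨅ i, hWmid.eigenvalues i) :
    ∀ W : Matrix (Fin n) (Fin n) ℝ, W.IsHermitian →
      (∀ i j, |W i j - Wmid i j| ≤ ΔW i j) → W.PosSemidef := by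
  intro W hW hWΔ
  refine posSemidef_iff_dotProduct_mulVec.mpr ⟨hW, fun x => ?_⟩
  rw [star_trivial]
  have hmid := hWmid.mul_dotProduct_self_le_dotProduct_mulVec
    (fun i => ciInf_le (Set.finite_range _).bddBelow i) x
  have hrad := hΔ.dotProduct_mulVec_le_mul_dotProduct_self (fun i => (le_abs_self _).trans
    (le_ciSup (f := fun i => |hΔ.eigenvalues i|) (Set.finite_range _).bddAbove i)) |x|
  rw [abs_dotProduct_abs] at hrad
  have hpert : |x ⬝ᵥ (W - Wmid) *ᵥ x| ≤ |x| ⬝ᵥ ΔW *ᵥ |x| :=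
    abs_dotProduct_mulVec_le hWΔ x
  have hxx : 0 ≤ x ⬝ᵥ x := Fintype.sum_nonneg fun i => mul_self_nonneg (x i)
  calc 0 ≤ (⨅ i, hWmid.eigenvalues i) * (x ⬝ᵥ x)
        - (⨆ i, |hΔ.eigenvalues i|) * (x ⬝ᵥ x) := sub_nonneg.mpr (mul_le_mul_of_nonneg_right hρ hxx)
    _ ≤ x ⬝ᵥ Wmid *ᵥ x - |x| ⬝ᵥ ΔW *ᵥ |x| := sub_le_sub hmid hrad
    _ ≤ x ⬝ᵥ Wmid *ᵥ x + x ⬝ᵥ (W - Wmid) *ᵥ x := by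
        linarith [neg_abs_le (x ⬝ᵥ (W - Wmid) *ᵥ x)]
    _ = x ⬝ᵥ W *ᵥ x := by rw [← dotProduct_add, ← add_mulVec, add_sub_cancel]

/-- If the spectral radius of the symmetric nonnegative radius
matrix `ΔW` is at most the minimum eigenvalue of the symmetric midpoint matrix
`Wmid`, then every symmetric matrix within the interval matrix
`[Wmid - ΔW, Wmid + ΔW]` is positive semidefinite. -/
theorem interval_matrix_posSemidef {n : ℕ} [NeZero n]
    (Wmid ΔW : Matrix (Fin n) (Fin n) ℝ)
    (hWmid : Wmid.IsHermitian) (hΔ : ΔW.IsHermitian)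
    (hΔnonneg : ∀ i j, 0 ≤ ΔW i j)
    (hρ : (⨆ i, |hΔ.eigenvalues i|) ≤ ⨅ i, hWmid.eigenvalues i) :
    ∀ W : Matrix (Fin n) (Fin n) ℝ, W.IsHermitian →
      (∀ i j, |W i j - Wmid i j| ≤ ΔW i j) → W.PosSemidef :=
  interval_matrix_posSemidef_general Wmid ΔW hWmid hΔ hρ
end

section
/- Let W_mid be a real symmetric n×n matrix and ΔW a symmetric n×n matrix with nonnegative entries. If ρ(ΔW) < λ_min(W_mid), then every symmetric matrix W with |W_{ij} − (W_mid)_{ij}| ≤ (ΔW)_{ij} for all i,j is positive definite. -/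
/-!
Write `μ` for the least eigenvalue of `Wmid` and `ρ` for the spectral radius of `ΔW`, so that
`Wmid - μ • 1` and `ρ • 1 - ΔW` are positive semidefinite. For `x ≠ 0`, the entrywise bound on
`W - Wmid` gives `|xᵀ (W - Wmid) x| ≤ |x|ᵀ ΔW |x| ≤ ρ ‖x‖²`, hence
`xᵀ W x ≥ (μ - ρ) ‖x‖² > 0`.
-/

open Matrix
open scoped ComplexOrder

namespace Matrix

section Spectral

variable {n 𝕜 : Type*} [Fintype n] [DecidableEq n] [RCLike 𝕜] {A : Matrix n n 𝕜}

lemma IsHermitian.conjStarAlgAut_diagonal_const (hA : A.IsHermitian) (c : ℝ) :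
    Unitary.conjStarAlgAut 𝕜 _ hA.eigenvectorUnitary (diagonal fun _ => (c : 𝕜)) =
      c • (1 : Matrix n n 𝕜) := by
  rw [← smul_one_eq_diagonal, map_smul, map_one, RCLike.real_smul_eq_coe_smul (K := 𝕜)]

lemma IsHermitian.posSemidef_sub_smul_one (hA : A.IsHermitian) {c : ℝ}
    (hc : ∀ i, c ≤ hA.eigenvalues i) : (A - c • (1 : Matrix n n 𝕜)).PosSemidef := by
  rw [← hA.conjStarAlgAut_diagonal_const]
  conv => arg 1; arg 1; rw [hA.spectral_theorem]
  rw [← map_sub, Unitary.conjStarAlgAut_apply,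
    Unitary.isUnit_coe.posSemidef_star_right_conjugate_iff, diagonal_sub, posSemidef_diagonal_iff]
  exact fun i => by simpa using hc i

lemma IsHermitian.posSemidef_smul_one_sub (hA : A.IsHermitian) {c : ℝ}
    (hc : ∀ i, hA.eigenvalues i ≤ c) : (c • (1 : Matrix n n 𝕜) - A).PosSemidef := by
  rw [← hA.conjStarAlgAut_diagonal_const]
  conv => arg 1; arg 2; rw [hA.spectral_theorem]
  rw [← map_sub, Unitary.conjStarAlgAut_apply,
    Unitary.isUnit_coe.posSemidef_star_right_conjugate_iff, diagonal_sub, posSemidef_diagonal_iff]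
  exact fun i => by simpa using hc i

end Spectral

section Real

variable {n : Type*} [Fintype n] [DecidableEq n] {A : Matrix n n ℝ}

lemma IsHermitian.mul_dotProduct_self_le (hA : A.IsHermitian) {c : ℝ}
    (hc : ∀ i, c ≤ hA.eigenvalues i) (x : n → ℝ) : c * (x ⬝ᵥ x) ≤ x ⬝ᵥ A *ᵥ x := by
  have := (hA.posSemidef_sub_smul_one hc).dotProduct_mulVec_nonneg x
  rw [star_trivial, sub_mulVec, dotProduct_sub, smul_mulVec, one_mulVec, dotProduct_smul,
    smul_eq_mul] at this
  linarith

lemma IsHermitian.dotProduct_mulVec_le_mul (hA : A.IsHermitian) {c : ℝ}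
    (hc : ∀ i, hA.eigenvalues i ≤ c) (x : n → ℝ) : x ⬝ᵥ A *ᵥ x ≤ c * (x ⬝ᵥ x) := by
  have := (hA.posSemidef_smul_one_sub hc).dotProduct_mulVec_nonneg x
  rw [star_trivial, sub_mulVec, dotProduct_sub, smul_mulVec, one_mulVec, dotProduct_smul,
    smul_eq_mul] at this
  linarith

end Real

lemma abs_dotProduct_mulVec_le_s1 {m n R : Type*} [Fintype m] [Fintype n] [CommRing R]
    [LinearOrder R] [IsStrictOrderedRing R] {E D : Matrix m n R} (hED : ∀ i j, |E i j| ≤ D i j)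
    (x : m → R) (y : n → R) :
    |x ⬝ᵥ E *ᵥ y| ≤ |x| ⬝ᵥ D *ᵥ |y| := by
  simp only [dotProduct, mulVec, Finset.mul_sum]
  refine (Finset.abs_sum_le_sum_abs _ _).trans <| Finset.sum_le_sum fun i _ => ?_
  refine (Finset.abs_sum_le_sum_abs _ _).trans <| Finset.sum_le_sum fun j _ => ?_
  rw [abs_mul, abs_mul, Pi.abs_apply, Pi.abs_apply]
  gcongr
  exact hED i j

end Matrix

theorem interval_matrix_posDef_general {n : ℕ}
    (Wmid ΔW : Matrix (Fin n) (Fin n) ℝ)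
    (hWmid : Wmid.IsHermitian) (hΔ : ΔW.IsHermitian)
    (hρ : (⨆ i, |hΔ.eigenvalues i|) < ⨅ i, hWmid.eigenvalues i) :
    ∀ W : Matrix (Fin n) (Fin n) ℝ, W.IsHermitian →
      (∀ i j, |W i j - Wmid i j| ≤ ΔW i j) → W.PosDef := by
  intro W hW hWin
  set ρ := ⨆ i, |hΔ.eigenvalues i|
  set μ := ⨅ i, hWmid.eigenvalues i
  refine PosDef.of_dotProduct_mulVec_pos hW fun x hx => ?_
  rw [star_trivial]
  have hx_pos : 0 < x ⬝ᵥ x := by simpa using dotProduct_star_self_pos_iff.mpr hx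
  have hmid : μ * (x ⬝ᵥ x) ≤ x ⬝ᵥ Wmid *ᵥ x :=
    hWmid.mul_dotProduct_self_le (fun i => ciInf_le (Set.finite_range _).bddBelow i) x
  have hΔx : |x| ⬝ᵥ ΔW *ᵥ |x| ≤ ρ * (x ⬝ᵥ x) := by
    have hρi : ∀ i, hΔ.eigenvalues i ≤ ρ := fun i =>
      (le_abs_self _).trans
        (le_ciSup (f := fun i => |hΔ.eigenvalues i|) (Set.finite_range _).bddAbove i)
    simpa [dotProduct, abs_mul_abs_self] using hΔ.dotProduct_mulVec_le_mul hρi |x|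
  have hpert : |x ⬝ᵥ (W - Wmid) *ᵥ x| ≤ |x| ⬝ᵥ ΔW *ᵥ |x| :=
    abs_dotProduct_mulVec_le_s1 (fun i j => by simpa using hWin i j) x x
  have hsplit : x ⬝ᵥ W *ᵥ x = x ⬝ᵥ Wmid *ᵥ x + x ⬝ᵥ (W - Wmid) *ᵥ x := by
    rw [sub_mulVec, dotProduct_sub]; ring
  have hgap := mul_lt_mul_of_pos_right hρ hx_pos
  linarith [neg_abs_le (x ⬝ᵥ (W - Wmid) *ᵥ x)]

/-- If the spectral radius of `ΔW` is strictly less than the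
minimum eigenvalue of `Wmid`, then every symmetric matrix within the interval
matrix `[Wmid - ΔW, Wmid + ΔW]` is positive definite. -/
theorem interval_matrix_posDef {n : ℕ} [NeZero n]
    (Wmid ΔW : Matrix (Fin n) (Fin n) ℝ)
    (hWmid : Wmid.IsHermitian) (hΔ : ΔW.IsHermitian)
    (hΔnonneg : ∀ i j, 0 ≤ ΔW i j)
    (hρ : (⨆ i, |hΔ.eigenvalues i|) < ⨅ i, hWmid.eigenvalues i) :
    ∀ W : Matrix (Fin n) (Fin n) ℝ, W.IsHermitian →
      (∀ i j, |W i j - Wmid i j| ≤ ΔW i j) → W.PosDef :=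
  interval_matrix_posDef_general Wmid ΔW hWmid hΔ hρ
end

section
/- Let F : ℝⁿ → ℝⁿ be continuously differentiable, x̂ ∈ [x] where [x] ⊂ ℝⁿ is a compact box, and C an n×n real matrix. Define the Krawczyk set K(x̂,[x],F) = { x̂ − C·F(x̂) + (I − C·J)·(y − x̂) : y ∈ [x], J an n×n matrix with J_{ij} ∈ [F′]([x])_{ij} }, where [F′]([x]) is an interval matrix containing F′(z) for all z ∈ [x]. If K(x̂,[x],F) is contained in the interior of [x], then there exists a unique x* ∈ K(x̂,[x],F) with F(x*) = 0. -/
/-!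
With `g y = y - C F(y)`, the row-wise mean value theorem writes `g y` as a point of the Krawczyk
set `K` with the same `y`, so `g` maps the box into `K ⊆ int [x]`. Comparing the points of `K`
built from opposite corners of the box shows that every `M = I - C J` with `J` in the enclosure
satisfies `∑ⱼ |Mᵢⱼ| wⱼ < wᵢ`, where `w = hi - lo`; hence `g` strictly decreases the weighted
max-norm `‖u / w‖` of differences. A minimiser of `‖(g x - x) / w‖` over the compact box is then a
fixed point of `g`, and it is the only one. The same row bound makes `C J`, hence `C`, invertible,
so the fixed points of `g` are exactly the zeros of `F`.
-/

/-- The Jacobian matrix of `F` at `z`: entry `(i, j)` is the partial derivative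
of the `i`-th component of `F` with respect to the `j`-th variable. -/
noncomputable def jacobianMatrix {n : ℕ} (F : (Fin n → ℝ) → (Fin n → ℝ))
    (z : Fin n → ℝ) : Matrix (Fin n) (Fin n) ℝ :=
  fun i j => fderiv ℝ F z (Pi.single j 1) i

open Set Matrix

theorem jacobianMatrix_mulVec {n : ℕ} (F : (Fin n → ℝ) → (Fin n → ℝ)) (z v : Fin n → ℝ) :
    jacobianMatrix F z *ᵥ v = fderiv ℝ F z v :=
  LinearMap.toMatrix'_mulVec (fderiv ℝ F z : (Fin n → ℝ) →ₗ[ℝ] (Fin n → ℝ)) v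

/-- A vector-valued map has no common mean-value point for all components, but each row has its
own. -/
theorem exists_mean_value_jacobian_rows {n : ℕ} {F : (Fin n → ℝ) → (Fin n → ℝ)}
    {s : Set (Fin n → ℝ)} (hs : Convex ℝ s) (hF : ∀ x ∈ s, DifferentiableAt ℝ F x)
    {a b : Fin n → ℝ} (ha : a ∈ s) (hb : b ∈ s) :
    ∃ z : Fin n → Fin n → ℝ, (∀ i, z i ∈ s) ∧
      F b - F a = Matrix.of (fun i j => jacobianMatrix F (z i) i j) *ᵥ (b - a) := by
  have row : ∀ i, ∃ z ∈ s, F b i - F a i = (jacobianMatrix F z *ᵥ (b - a)) i := by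
    intro i
    let proj := ContinuousLinearMap.proj (R := ℝ) (φ := fun _ : Fin n => ℝ) i
    obtain ⟨z, hz, h⟩ := domain_mvt (f := fun x => F x i)
      (f' := fun z => proj.comp (fderiv ℝ F z))
      (fun x hx => (proj.hasFDerivAt.comp x (hF x hx).hasFDerivAt).hasFDerivWithinAt) hs ha hb
    exact ⟨z, hs.segment_subset ha hb hz, by rw [h, jacobianMatrix_mulVec]; rfl⟩
  choose z hz h using row
  exact ⟨z, hz, funext h⟩

theorem apply_mem_Ioo_of_mem_interior_Icc {ι : Type*} [Finite ι] {lo hi x : ι → ℝ}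
    (hx : x ∈ interior (Icc lo hi)) (i : ι) : x i ∈ Ioo (lo i) (hi i) := by
  rw [← pi_univ_Icc, interior_pi_set finite_univ] at hx
  simpa using hx i (mem_univ i)

theorem exists_mulVec_sub_apply_eq_sum_abs_mul {m ι : Type*} [Fintype ι] {lo hi : ι → ℝ}
    (hlo : lo ≤ hi) (M : Matrix m ι ℝ) (i : m) :
    ∃ y ∈ Icc lo hi, ∃ y' ∈ Icc lo hi, (M *ᵥ (y - y')) i = ∑ j, |M i j| * (hi j - lo j) := by
  classical
  refine ⟨fun j => if 0 ≤ M i j then hi j else lo j, ⟨fun j => ?_, fun j => ?_⟩,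
    fun j => if 0 ≤ M i j then lo j else hi j, ⟨fun j => ?_, fun j => ?_⟩, ?_⟩
  all_goals try (dsimp only; split_ifs <;> simp [hlo j])
  refine Finset.sum_congr rfl fun j _ => ?_
  simp only [Pi.sub_apply]
  split_ifs with h
  · rw [abs_of_nonneg h]
  · rw [abs_of_neg (not_le.1 h)]; ring

theorem sum_abs_mul_width_lt_of_forall_mem_interior {ι : Type*} [Fintype ι]
    {lo hi c x₀ : ι → ℝ} (hlo : lo ≤ hi) {M : Matrix ι ι ℝ}
    (hM : ∀ y ∈ Icc lo hi, c + M *ᵥ (y - x₀) ∈ interior (Icc lo hi)) (i : ι) :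
    ∑ j, |M i j| * (hi - lo) j < (hi - lo) i := by
  obtain ⟨y, hy, y', hy', hspread⟩ := exists_mulVec_sub_apply_eq_sum_abs_mul hlo M i
  have hdiff : (c + M *ᵥ (y - x₀)) - (c + M *ᵥ (y' - x₀)) = M *ᵥ (y - y') := by
    rw [add_sub_add_left_eq_sub, ← mulVec_sub, sub_sub_sub_cancel_right]
  have hupper := (apply_mem_Ioo_of_mem_interior_Icc (hM y hy) i).2
  have hlower := (apply_mem_Ioo_of_mem_interior_Icc (hM y' hy') i).1
  have hdiff_i := congrFun hdiff i
  simp only [Pi.sub_apply] at hdiff_i hupper hlower ⊢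
  linarith

theorem norm_mulVec_div_lt {ι : Type*} [Fintype ι] {M : Matrix ι ι ℝ} {w : ι → ℝ}
    (hw : ∀ i, 0 < w i) (hM : ∀ i, ∑ j, |M i j| * w j < w i) {u : ι → ℝ} (hu : u ≠ 0) :
    ‖M *ᵥ u / w‖ < ‖u / w‖ := by
  have hnorm : ∀ v : ι → ℝ, ∀ i, ‖(v / w) i‖ = |v i| / w i := fun v i => by
    rw [Pi.div_apply, Real.norm_eq_abs, abs_div, abs_of_pos (hw i)]
  have hpos : 0 < ‖u / w‖ := by
    obtain ⟨j, hj⟩ := Function.ne_iff.1 hu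
    exact (div_pos (abs_pos.2 hj) (hw j)).trans_le (hnorm u j ▸ norm_le_pi_norm (u / w) j)
  have hu_le : ∀ j, |u j| ≤ ‖u / w‖ * w j := fun j => by
    rw [← div_le_iff₀ (hw j), ← hnorm]
    exact norm_le_pi_norm (u / w) j
  refine (pi_norm_lt_iff hpos).2 fun i => ?_
  rw [hnorm, div_lt_iff₀ (hw i)]
  calc |(M *ᵥ u) i| ≤ ∑ j, |M i j| * |u j| := by
        simpa only [mulVec, dotProduct, abs_mul] using
          Finset.abs_sum_le_sum_abs (fun j => M i j * u j) Finset.univ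
    _ ≤ ∑ j, |M i j| * (‖u / w‖ * w j) :=
        Finset.sum_le_sum fun j _ => mul_le_mul_of_nonneg_left (hu_le j) (abs_nonneg _)
    _ = ‖u / w‖ * ∑ j, |M i j| * w j := by
        rw [Finset.mul_sum]
        exact Finset.sum_congr rfl fun j _ => by ring
    _ < ‖u / w‖ * w i := mul_lt_mul_of_pos_left (hM i) hpos

theorem isUnit_of_sum_abs_one_sub_mul_lt {ι : Type*} [Fintype ι] [DecidableEq ι]
    {C J : Matrix ι ι ℝ} {w : ι → ℝ} (hw : ∀ i, 0 < w i)
    (hCJ : ∀ i, ∑ j, |(1 - C * J) i j| * w j < w i) : IsUnit C := by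
  refine isUnit_of_mul_isUnit_left (y := J) (mulVec_injective_iff_isUnit.1 fun a b hab => ?_)
  by_contra hne
  have h := norm_mulVec_div_lt hw hCJ (sub_ne_zero.2 hne)
  rw [sub_mulVec, one_mulVec, mulVec_sub, hab, sub_self, sub_zero] at h
  exact h.false

theorem IsCompact.exists_isFixedPt_of_sub_lt {E : Type*} [TopologicalSpace E] [AddGroup E]
    [ContinuousSub E] {s : Set E} (hs : IsCompact s) (hne : s.Nonempty) {g : E → E}
    (hgs : MapsTo g s s) (hg : ContinuousOn g s) {ν : E → ℝ} (hν : Continuous ν)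
    (hlt : ∀ x ∈ s, ∀ y ∈ s, x ≠ y → ν (g x - g y) < ν (x - y)) :
    ∃ x ∈ s, Function.IsFixedPt g x := by
  obtain ⟨x, hx, hmin⟩ := hs.exists_isMinOn hne (hν.comp_continuousOn (hg.sub continuousOn_id))
  exact ⟨x, hx, by_contra fun h => (hlt _ (hgs hx) x hx h).not_ge (hmin (hgs hx))⟩

section SimplifiedNewton

variable {ι : Type*} [Fintype ι] [DecidableEq ι]

def simplifiedNewton (C : Matrix ι ι ℝ) (F : (ι → ℝ) → ι → ℝ) (y : ι → ℝ) : ι → ℝ :=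
  y - C *ᵥ F y

theorem simplifiedNewton_sub {C J : Matrix ι ι ℝ} {F : (ι → ℝ) → ι → ℝ} {a b : ι → ℝ}
    (h : F b - F a = J *ᵥ (b - a)) :
    simplifiedNewton C F b - simplifiedNewton C F a = (1 - C * J) *ᵥ (b - a) := by
  rw [simplifiedNewton, simplifiedNewton, sub_mulVec, one_mulVec, ← mulVec_mulVec, ← h,
    mulVec_sub]
  abel

theorem simplifiedNewton_eq_self_iff {C : Matrix ι ι ℝ} (hC : IsUnit C)
    {F : (ι → ℝ) → ι → ℝ} {x : ι → ℝ} : simplifiedNewton C F x = x ↔ F x = 0 := by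
  rw [simplifiedNewton, sub_eq_self, (mulVec_injective_iff_isUnit.2 hC).eq_iff' (mulVec_zero C)]

end SimplifiedNewton

/-- Krawczyk operator test: if the Krawczyk set
`K(xh,[x],F) = { xh − C·F(xh) + (I − C·J)·(y − xh) }` (over `y` in the box and
`J` in an interval enclosure of the Jacobian) is contained in the interior of
the box `[x]`, then `F` has a unique zero in `K(xh,[x],F)`. -/
theorem krawczyk_existence_uniqueness {n : ℕ}
    (F : (Fin n → ℝ) → (Fin n → ℝ)) (hF : ContDiff ℝ 1 F)
    (lo hi : Fin n → ℝ) (hbox : lo ≤ hi)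
    (xh : Fin n → ℝ) (hxh : xh ∈ Set.Icc lo hi)
    (C : Matrix (Fin n) (Fin n) ℝ)
    (Jlo Jhi : Matrix (Fin n) (Fin n) ℝ)
    (hencl : ∀ z ∈ Set.Icc lo hi, ∀ i j,
      Jlo i j ≤ jacobianMatrix F z i j ∧ jacobianMatrix F z i j ≤ Jhi i j)
    (Kset : Set (Fin n → ℝ))
    (hKset : Kset = { w | ∃ y ∈ Set.Icc lo hi, ∃ J : Matrix (Fin n) (Fin n) ℝ,
      (∀ i j, Jlo i j ≤ J i j ∧ J i j ≤ Jhi i j) ∧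
      w = xh - C.mulVec (F xh) + (1 - C * J).mulVec (y - xh) })
    (hsub : Kset ⊆ interior (Set.Icc lo hi)) :
    ∃! x : Fin n → ℝ, x ∈ Kset ∧ F x = 0 := by
  have hmemK : ∀ y ∈ Icc lo hi, ∀ J : Matrix (Fin n) (Fin n) ℝ,
      (∀ i j, Jlo i j ≤ J i j ∧ J i j ≤ Jhi i j) →
      xh - C *ᵥ F xh + (1 - C * J) *ᵥ (y - xh) ∈ Kset := fun y hy J hJ =>
    hKset ▸ ⟨y, hy, J, hJ, rfl⟩
  set g := simplifiedNewton C F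
  have hmvt : ∀ a ∈ Icc lo hi, ∀ b ∈ Icc lo hi, ∃ J : Matrix (Fin n) (Fin n) ℝ,
      (∀ i j, Jlo i j ≤ J i j ∧ J i j ≤ Jhi i j) ∧ g b - g a = (1 - C * J) *ᵥ (b - a) := by
    intro a ha b hb
    obtain ⟨z, hz, hFab⟩ := exists_mean_value_jacobian_rows (convex_Icc lo hi)
      (fun x _ => (hF.differentiable one_ne_zero).differentiableAt) ha hb
    exact ⟨_, fun i j => hencl (z i) (hz i) i j, simplifiedNewton_sub hFab⟩
  have hgK : ∀ y ∈ Icc lo hi, g y ∈ Kset := fun y hy => by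
    obtain ⟨J, hJ, hgy⟩ := hmvt xh hxh y hy
    convert hmemK y hy J hJ
    rw [← hgy]
    exact (add_sub_cancel (g xh) (g y)).symm
  have hrow : ∀ J : Matrix (Fin n) (Fin n) ℝ, (∀ i j, Jlo i j ≤ J i j ∧ J i j ≤ Jhi i j) →
      ∀ i, ∑ j, |(1 - C * J) i j| * (hi - lo) j < (hi - lo) i := fun J hJ =>
    sum_abs_mul_width_lt_of_forall_mem_interior hbox fun y hy => hsub (hmemK y hy J hJ)
  have hwidth : ∀ i, 0 < (hi - lo) i := fun i =>
    sub_pos.2 ((apply_mem_Ioo_of_mem_interior_Icc (hsub (hgK xh hxh)) i).elim lt_trans)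
  have hcontr : ∀ x ∈ Icc lo hi, ∀ y ∈ Icc lo hi, x ≠ y →
      ‖(g x - g y) / (hi - lo)‖ < ‖(x - y) / (hi - lo)‖ := fun x hx y hy hxy => by
    obtain ⟨J, hJ, hgxy⟩ := hmvt y hy x hx
    exact hgxy ▸ norm_mulVec_div_lt hwidth (hrow J hJ) (sub_ne_zero.2 hxy)
  have hC : IsUnit C := isUnit_of_sum_abs_one_sub_mul_lt hwidth (hrow _ (hencl xh hxh))
  obtain ⟨xs, hxs, hfix⟩ := isCompact_Icc.exists_isFixedPt_of_sub_lt ⟨xh, hxh⟩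
    (fun y hy => interior_subset (hsub (hgK y hy)))
    (continuous_id.sub (continuous_const.matrix_mulVec hF.continuous)).continuousOn
    (continuous_norm.comp (continuous_id.div_const _)) hcontr
  refine ⟨xs, ⟨hfix ▸ hgK xs hxs, (simplifiedNewton_eq_self_iff hC).1 hfix⟩, ?_⟩
  rintro x ⟨hxK, hFx⟩
  by_contra hne
  have hgx : g x = x := (simplifiedNewton_eq_self_iff hC).2 hFx
  have h := hcontr x (interior_subset (hsub hxK)) xs hxs hne
  rw [hgx, hfix] at h
  exact h.false
end

section
/- Let F : ℝʳ → ℝˢ be continuously differentiable with r > s, let q̂ ∈ ℝʳ, and let B ⊂ {1,…,r} with |B| = s be such that the submatrix F′_B(q̂) of the Jacobian formed by the columns indexed by B is invertible; let N be the complement of B. Let r₁, r₂ ≥ 0, K ≥ 0, and let [q] = { q : ‖q_B − q̂_B‖ ≤ r₁, ‖q_N − q̂_N‖ ≤ r₂ }. Assume ‖F′_B(q) − F′_B(q̂)‖ ≤ K‖q − q̂‖ for all q ∈ [q]. If for a given v ∈ ℝˢ, ‖F′_B(q̂)⁻¹(F(q̂) − v)‖ + ‖F′_B(q̂)⁻¹‖·(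 (1/2)·K·(r₁ + r₂)·r₁ + (sup_{q∈[q]} ‖F′_N(q)‖)·r₂ ) ≤ r₁, then there exists q* ∈ [q] with F(q*) = v. -/
open scoped Matrix.Norms.L2Operator

noncomputable def eNorm {k : ℕ} (v : Fin k → ℝ) : ℝ :=
  Real.sqrt (∑ i, v i ^ 2)

noncomputable def jacMatrix {r s : ℕ} (F : (Fin r → ℝ) → (Fin s → ℝ))
    (z : Fin r → ℝ) : Matrix (Fin s) (Fin r) ℝ :=
  fun i j => fderiv ℝ F z (Pi.single j 1) i

/-!
Freeze the non-basic coordinates at `q̂_N` and solve for `x = q_B` alone, i.e. for the point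
`Function.extend B x q̂`. In these coordinates `G x = F'_B(q̂)⁻¹ F(x, q̂_N)` has derivative within
`β ‖x - q̂_B‖` of the identity, `β = ‖F'_B(q̂)⁻¹‖ K`, so integrating along segments gives
`‖G x - G y - (x - y)‖ ≤ β (‖x - b‖ + ‖y - b‖) / 2 ‖x - y‖`. As in Kantorovich's theorem,
`x ↦ x - (G x - u)` then maps the ball of radius `ρ` about `b` into itself as soon as
`‖u - G b‖ + β ρ² / 2 ≤ ρ`, and is a contraction there when `β ρ < 1`; the hypothesis gives the
first inequality for `ρ = r₁`, all terms involving `r₂` being nonnegative. The borderline case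
`β ρ = 1` is handled by solving for the targets `G b + t (u - G b)`, `t < 1`, and letting `t → 1`
inside the compact image of the ball.
-/

open Set Metric Filter Topology

theorem exists_radius_le_mul_le_one {β η r : ℝ} (hβ : 0 ≤ β) (hη : 0 ≤ η)
    (h : η + β / 2 * r ^ 2 ≤ r) :
    ∃ ρ, 0 ≤ ρ ∧ ρ ≤ r ∧ β * ρ ≤ 1 ∧ η + β / 2 * ρ ^ 2 ≤ ρ := by
  have hr : 0 ≤ r := by nlinarith
  by_cases hβr : β * r ≤ 1
  · exact ⟨r, hr, le_rfl, hβr, h⟩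
  have hβ0 : 0 < β := lt_of_le_of_ne hβ (by rintro rfl; simp at hβr)
  refine ⟨β⁻¹, inv_nonneg.2 hβ, ?_, (mul_inv_cancel₀ hβ0.ne').le, ?_⟩
  · rw [inv_le_iff_one_le_mul₀' hβ0]
    linarith
  · have hβη : β * η ≤ 1 / 2 := by
      nlinarith [mul_le_mul_of_nonneg_left h hβ, sq_nonneg (β * r - 1)]
    have hinv : β * β⁻¹ = 1 := mul_inv_cancel₀ hβ0.ne'
    nlinarith [mul_le_mul_of_nonneg_left hβη (inv_nonneg.2 hβ)]

section Kantorovich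

variable {E : Type*} [NormedAddCommGroup E]

theorem exists_eq_of_norm_sub_sub_le_of_mul_lt_one [CompleteSpace E] {G : E → E} {b u : E}
    {β ρ : ℝ} (hβ : 0 ≤ β) (hρ : 0 ≤ ρ) (hβρ : β * ρ < 1)
    (hG : ∀ x ∈ closedBall b ρ, ∀ y ∈ closedBall b ρ,
      ‖G x - G y - (x - y)‖ ≤ β * ((‖x - b‖ + ‖y - b‖) / 2) * ‖x - y‖)
    (hu : ‖u - G b‖ + β / 2 * ρ ^ 2 ≤ ρ) :
    ∃ x ∈ closedBall b ρ, G x = u := by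
  set Φ : E → E := fun x => x + (u - G x)
  have hΦ : ∀ x y, Φ x - Φ y = -(G x - G y - (x - y)) := fun x y => by simp only [Φ]; abel
  have hmaps : MapsTo Φ (closedBall b ρ) (closedBall b ρ) := by
    intro z hz
    have hGz := hG z hz b (mem_closedBall_self hρ)
    rw [sub_self, norm_zero, add_zero] at hGz
    rw [mem_closedBall, dist_eq_norm] at hz ⊢
    calc ‖Φ z - b‖ = ‖(Φ z - Φ b) + (u - G b)‖ := by simp only [Φ]; congr 1; abel
      _ ≤ ‖Φ z - Φ b‖ + ‖u - G b‖ := norm_add_le _ _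
      _ ≤ β / 2 * ‖z - b‖ ^ 2 + ‖u - G b‖ := by rw [hΦ, norm_neg]; linarith
      _ ≤ β / 2 * ρ ^ 2 + ‖u - G b‖ := by gcongr
      _ ≤ ρ := by linarith
  have hcoe : ((β * ρ).toNNReal : ℝ) = β * ρ := Real.coe_toNNReal _ (mul_nonneg hβ hρ)
  have hlip : LipschitzWith (β * ρ).toNNReal (hmaps.restrict Φ _ _) := by
    refine LipschitzWith.of_dist_le_mul fun x y => ?_
    have hx := mem_closedBall_iff_norm.1 x.2
    have hy := mem_closedBall_iff_norm.1 y.2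
    rw [Subtype.dist_eq, Subtype.dist_eq, MapsTo.val_restrict_apply, MapsTo.val_restrict_apply,
      dist_eq_norm, dist_eq_norm, hΦ, norm_neg, hcoe]
    calc _ ≤ β * ((‖(x : E) - b‖ + ‖(y : E) - b‖) / 2) * ‖(x : E) - y‖ := hG _ x.2 _ y.2
      _ ≤ β * ρ * ‖(x : E) - y‖ := by gcongr; linarith
  have hK : (β * ρ).toNNReal < 1 := by rw [← NNReal.coe_lt_coe, hcoe]; exact hβρ
  obtain ⟨x, hx, hfix, -⟩ := ContractingWith.exists_fixedPoint' isClosed_closedBall.isComplete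
    hmaps ⟨hK, hlip⟩ (mem_closedBall_self hρ) (edist_ne_top _ _)
  have hx0 : u - G x = 0 := by simpa [Φ, Function.IsFixedPt] using hfix
  exact ⟨x, hx, (sub_eq_zero.1 hx0).symm⟩

variable [NormedSpace ℝ E]

theorem norm_sub_le_convex_comb_of_mem_Icc (b x y : E) {τ : ℝ} (hτ : τ ∈ Icc (0 : ℝ) 1) :
    ‖y + τ • (x - y) - b‖ ≤ (1 - τ) * ‖y - b‖ + τ * ‖x - b‖ := by
  calc ‖y + τ • (x - y) - b‖ = ‖(1 - τ) • (y - b) + τ • (x - b)‖ := by congr 1; module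
    _ ≤ (1 - τ) * ‖y - b‖ + τ * ‖x - b‖ := by
      refine (norm_add_le _ _).trans_eq ?_
      rw [norm_smul, norm_smul, Real.norm_of_nonneg (sub_nonneg.2 hτ.2),
        Real.norm_of_nonneg hτ.1]

theorem norm_sub_sub_le_of_norm_fderiv_sub_le {F : Type*} [NormedAddCommGroup F]
    [NormedSpace ℝ F] {f : E → F} {f' : E → E →L[ℝ] F} {A : E →L[ℝ] F} {s : Set E} {b x y : E}
    {K : ℝ} (hK : 0 ≤ K) (hs : Convex ℝ s) (hx : x ∈ s) (hy : y ∈ s)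
    (hf : ∀ z ∈ s, HasFDerivAt f (f' z) z) (hf' : ∀ z ∈ s, ‖f' z - A‖ ≤ K * ‖z - b‖) :
    ‖f x - f y - A (x - y)‖ ≤ K * ((‖x - b‖ + ‖y - b‖) / 2) * ‖x - y‖ := by
  set p : ℝ → E := fun τ => y + τ • (x - y)
  have hps : ∀ τ ∈ Icc (0 : ℝ) 1, p τ ∈ s := fun τ hτ => hs.add_smul_sub_mem hy hx hτ
  set g : ℝ → F := fun τ => f (p τ) - f y - τ • A (x - y)
  have hg : ∀ τ ∈ Icc (0 : ℝ) 1, HasDerivAt g ((f' (p τ) - A) (x - y)) τ := by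
    intro τ hτ
    have hp : HasDerivAt p (x - y) τ :=
      (((hasDerivAt_id τ).smul_const (x - y)).const_add y).congr_deriv (one_smul ℝ _)
    exact ((((hf _ (hps τ hτ)).comp_hasDerivAt τ hp).sub_const (f y)).sub
      ((hasDerivAt_id τ).smul_const (A (x - y)))).congr_deriv (by rw [one_smul, sub_apply])
  -- `φ` is the integral over `[0, τ]` of the bound on `‖g'‖` coming from `hf'`.
  set c := K * ‖x - y‖
  set φ : ℝ → ℝ := fun τ => c * (τ * ‖y - b‖ + τ ^ 2 / 2 * (‖x - b‖ - ‖y - b‖))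
  have hφ : ∀ τ, HasDerivAt φ (c * (‖y - b‖ + τ * (‖x - b‖ - ‖y - b‖))) τ := fun τ =>
    ((((hasDerivAt_id τ).mul_const ‖y - b‖).add
      (((hasDerivAt_pow 2 τ).div_const 2).mul_const (‖x - b‖ - ‖y - b‖))).const_mul c).congr_deriv
      (by norm_num)
  have hbound : ∀ τ ∈ Ico (0 : ℝ) 1,
      ‖(f' (p τ) - A) (x - y)‖ ≤ c * (‖y - b‖ + τ * (‖x - b‖ - ‖y - b‖)) := by
    intro τ hτ
    have hτ' := Ico_subset_Icc_self hτ
    calc ‖(f' (p τ) - A) (x - y)‖ ≤ ‖f' (p τ) - A‖ * ‖x - y‖ := (f' (p τ) - A).le_opNorm _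
      _ ≤ K * ((1 - τ) * ‖y - b‖ + τ * ‖x - b‖) * ‖x - y‖ := by
        gcongr
        exact (hf' _ (hps τ hτ')).trans
          (mul_le_mul_of_nonneg_left (norm_sub_le_convex_comb_of_mem_Icc b x y hτ') hK)
      _ = c * (‖y - b‖ + τ * (‖x - b‖ - ‖y - b‖)) := by ring
  have hg1 := image_norm_le_of_norm_deriv_right_le_deriv_boundary
    (fun τ hτ => (hg τ hτ).continuousAt.continuousWithinAt)
    (fun τ hτ => (hg τ (Ico_subset_Icc_self hτ)).hasDerivWithinAt) (by simp [g, p, φ]) hφ hbound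
    (right_mem_Icc.2 zero_le_one)
  calc ‖f x - f y - A (x - y)‖ = ‖g 1‖ := by simp [g, p]
    _ ≤ φ 1 := hg1
    _ = K * ((‖x - b‖ + ‖y - b‖) / 2) * ‖x - y‖ := by ring

theorem exists_eq_of_norm_fderiv_sub_id_le [ProperSpace E] {G : E → E} {G' : E → E →L[ℝ] E}
    {b u : E} {β r : ℝ} (hβ : 0 ≤ β)
    (hG : ∀ z ∈ closedBall b r, HasFDerivAt G (G' z) z)
    (hG' : ∀ z ∈ closedBall b r, ‖G' z - ContinuousLinearMap.id ℝ E‖ ≤ β * ‖z - b‖)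
    (hu : ‖u - G b‖ + β / 2 * r ^ 2 ≤ r) :
    ∃ x ∈ closedBall b r, G x = u := by
  obtain ⟨ρ, hρ0, hρr, hβρ, hρ⟩ := exists_radius_le_mul_le_one hβ (norm_nonneg _) hu
  have happrox : ∀ t ∈ Ico (0 : ℝ) 1, G b + t • (u - G b) ∈ G '' closedBall b r := by
    rintro t ⟨ht0, ht1⟩
    have hsub : closedBall b (t * ρ) ⊆ closedBall b r :=
      closedBall_subset_closedBall (by nlinarith)
    obtain ⟨x, hx, hGx⟩ := exists_eq_of_norm_sub_sub_le_of_mul_lt_one (u := G b + t • (u - G b))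
      hβ (mul_nonneg ht0 hρ0) (by nlinarith)
      (fun x hx y hy => norm_sub_sub_le_of_norm_fderiv_sub_le hβ (convex_closedBall b r)
        (hsub hx) (hsub hy) hG hG')
      (by
        rw [add_sub_cancel_left, norm_smul, Real.norm_of_nonneg ht0]
        nlinarith [mul_le_mul_of_nonneg_left hρ ht0, mul_nonneg (mul_nonneg hβ (sq_nonneg ρ))
          (mul_nonneg ht0 (sub_nonneg.2 ht1.le))])
    exact ⟨x, hsub hx, hGx⟩
  have hclosed : IsClosed (G '' closedBall b r) :=
    ((isCompact_closedBall b r).image_of_continuousOn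
      fun z hz => (hG z hz).continuousAt.continuousWithinAt).isClosed
  have hlim : Tendsto (fun t : ℝ => G b + t • (u - G b)) (𝓝[<] 1) (𝓝 u) := by
    have : Continuous fun t : ℝ => G b + t • (u - G b) := by fun_prop
    simpa using (this.tendsto 1).mono_left nhdsWithin_le_nhds
  exact hclosed.mem_of_tendsto hlim (eventually_of_mem (Ioo_mem_nhdsLT one_pos)
    fun t ht => happrox t (Ioo_subset_Ico_self ht))

end Kantorovich

open Function Matrix WithLp

theorem extend_comp_self {α β γ : Type*} {f : α → β} (hf : Injective f) (g : β → γ) :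
    extend f (g ∘ f) g = g := by
  ext j
  by_cases hj : ∃ k, f k = j
  · obtain ⟨k, rfl⟩ := hj
    simp [hf.extend_apply]
  · simp [extend_apply' _ _ _ hj]

theorem extend_zero_eq_sum_single {ι κ R : Type*} [Fintype ι] [DecidableEq κ] [Semiring R]
    {f : ι → κ} (hf : Injective f) (d : ι → R) :
    extend f d 0 = ∑ k, d k • Pi.single (f k) (1 : R) := by
  ext j
  simp only [Finset.sum_apply, Pi.smul_apply, Pi.single_apply, smul_eq_mul, mul_ite, mul_one,
    mul_zero]
  by_cases hj : ∃ k, f k = j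
  · obtain ⟨k, rfl⟩ := hj
    rw [hf.extend_apply, Finset.sum_eq_single k (fun i _ hi => if_neg (hf.ne hi).symm) (by simp),
      if_pos rfl]
  · rw [extend_apply' _ _ _ hj]
    exact (Finset.sum_eq_zero fun k _ => if_neg fun h => hj ⟨k, h.symm⟩).symm

section Columns

variable {r s t : ℕ} {B : Fin s → Fin r}

def coordBox (B : Fin s → Fin r) (N : Fin t → Fin r) (q : Fin r → ℝ) (r₁ r₂ : ℝ) :
    Set (Fin r → ℝ) :=
  { p | eNorm (fun j => p (B j) - q (B j)) ≤ r₁ ∧ eNorm (fun j => p (N j) - q (N j)) ≤ r₂ }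

theorem eNorm_eq_norm_toLp {k : ℕ} (v : Fin k → ℝ) : eNorm v = ‖toLp 2 v‖ := by
  simp [eNorm, EuclideanSpace.norm_eq, sq_abs]

theorem eNorm_extend_zero (hB : Injective B) (d : Fin s → ℝ) :
    eNorm (extend B d 0) = eNorm d := by
  unfold eNorm
  congr 1
  refine (Fintype.sum_of_injective B hB _ _ (fun j hj => ?_) fun i => by rw [hB.extend_apply]).symm
  rw [extend_apply' _ _ _ hj, Pi.zero_apply, sq, mul_zero]

theorem eNorm_extend_sub_self (hB : Injective B) (x : EuclideanSpace ℝ (Fin s))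
    (q : Fin r → ℝ) : eNorm (extend B (ofLp x) q - q) = ‖x - toLp 2 (q ∘ B)‖ := by
  have h : extend B (ofLp x) q - q = extend B (ofLp x - q ∘ B) (q - q) := by
    rw [extend_sub, extend_comp_self hB]
  rw [h, sub_self, eNorm_extend_zero hB, eNorm_eq_norm_toLp, toLp_sub, toLp_ofLp]

theorem extend_mem_coordBox {N : Fin t → Fin r} (hB : Injective B)
    (hdisj : Disjoint (range B) (range N)) {q : Fin r → ℝ} {r₁ r₂ : ℝ} (hr₂ : 0 ≤ r₂)
    {x : EuclideanSpace ℝ (Fin s)} (hx : x ∈ closedBall (toLp 2 (q ∘ B)) r₁) :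
    extend B (ofLp x) q ∈ coordBox B N q r₁ r₂ := by
  have hBcoord : (fun j => extend B (ofLp x) q (B j) - q (B j)) = ofLp (x - toLp 2 (q ∘ B)) := by
    ext j
    simp [hB.extend_apply]
  have hNcoord : (fun j => extend B (ofLp x) q (N j) - q (N j)) = 0 := by
    ext j
    rw [extend_apply' _ _ _ fun hj => disjoint_left.1 hdisj hj ⟨j, rfl⟩, sub_self, Pi.zero_apply]
  rw [coordBox, mem_ofPred_eq, hBcoord, hNcoord, eNorm_eq_norm_toLp, toLp_ofLp]
  exact ⟨mem_closedBall_iff_norm.1 hx, by simpa [eNorm] using hr₂⟩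

theorem hasFDerivAt_toLp_comp_extend {F : (Fin r → ℝ) → (Fin s → ℝ)} (hB : Injective B)
    (q : Fin r → ℝ) {x : EuclideanSpace ℝ (Fin s)}
    (hF : DifferentiableAt ℝ F (extend B (ofLp x) q)) {J : Matrix (Fin s) (Fin s) ℝ}
    (hJ : ∀ i j, J i j = jacMatrix F (extend B (ofLp x) q) i (B j)) :
    HasFDerivAt (fun y : EuclideanSpace ℝ (Fin s) => toLp 2 (F (extend B (ofLp y) q)))
      (toEuclideanCLM (𝕜 := ℝ) J) x := by
  set ιL : EuclideanSpace ℝ (Fin s) →L[ℝ] (Fin r → ℝ) :=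
    (LinearMap.toContinuousLinearMap (ExtendByZero.linearMap ℝ B)).comp
      (EuclideanSpace.equiv (Fin s) ℝ : EuclideanSpace ℝ (Fin s) →L[ℝ] (Fin s → ℝ))
  have hι : HasFDerivAt (fun y : EuclideanSpace ℝ (Fin s) => extend B (ofLp y) q) ιL x := by
    have hιL : (fun y : EuclideanSpace ℝ (Fin s) => extend B (ofLp y) q) =
        fun y => ιL y + extend B 0 q := by
      funext y
      change extend B (ofLp y) q = extend B (ofLp y) 0 + extend B 0 q
      rw [← extend_add, add_zero, zero_add]
    rw [hιL]
    exact ιL.hasFDerivAt.add_const _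
  refine ((EuclideanSpace.equiv (Fin s) ℝ).symm.hasFDerivAt.comp x
    (hF.hasFDerivAt.comp x hι)).congr_fderiv ?_
  ext d i
  change fderiv ℝ F _ (extend B (ofLp d) 0) i = (J *ᵥ ofLp d) i
  rw [extend_zero_eq_sum_single hB, map_sum]
  simp [mulVec, dotProduct, hJ, jacMatrix, mul_comm]

theorem hasFDerivAt_toLp_mulVec_comp_extend {F : (Fin r → ℝ) → (Fin s → ℝ)} (hB : Injective B)
    (M : Matrix (Fin s) (Fin s) ℝ) (q : Fin r → ℝ) {x : EuclideanSpace ℝ (Fin s)}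
    (hF : DifferentiableAt ℝ F (extend B (ofLp x) q)) {J : Matrix (Fin s) (Fin s) ℝ}
    (hJ : ∀ i j, J i j = jacMatrix F (extend B (ofLp x) q) i (B j)) :
    HasFDerivAt (fun y : EuclideanSpace ℝ (Fin s) => toLp 2 (M *ᵥ F (extend B (ofLp y) q)))
      (toEuclideanCLM (𝕜 := ℝ) (M * J)) x := by
  rw [map_mul, ContinuousLinearMap.mul_def]
  exact (toEuclideanCLM (𝕜 := ℝ) M).hasFDerivAt.comp x (hasFDerivAt_toLp_comp_extend hB q hF hJ)

end Columns

theorem norm_toEuclideanCLM_inv_mul_sub_id_le {n : Type*} [Fintype n] [DecidableEq n]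
    {A : Matrix n n ℝ} (hA : IsUnit A.det) (M : Matrix n n ℝ) :
    ‖toEuclideanCLM (𝕜 := ℝ) (A⁻¹ * M) - ContinuousLinearMap.id ℝ _‖ ≤ ‖A⁻¹‖ * ‖M - A‖ := by
  rw [← ContinuousLinearMap.one_def, ← map_one (toEuclideanCLM (n := n) (𝕜 := ℝ)), ← map_sub,
    ← nonsing_inv_mul A hA, ← mul_sub, ← cstar_norm_def]
  exact norm_mul_le _ _

theorem underdetermined_existence_general {r s t : ℕ}
    (F : (Fin r → ℝ) → (Fin s → ℝ)) (hF : ContDiff ℝ 1 F)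
    (qh : Fin r → ℝ)
    (B : Fin s → Fin r) (N : Fin t → Fin r)
    (hB : Function.Injective B)
    (hdisj : Disjoint (Set.range B) (Set.range N))
    -- the `B`-columns of the Jacobian at `q̂`, and its inverse
    (FB : (Fin r → ℝ) → Matrix (Fin s) (Fin s) ℝ)
    (hFB : ∀ q, FB q = fun i j => jacMatrix F q i (B j))
    (FN : (Fin r → ℝ) → Matrix (Fin s) (Fin t) ℝ)
    (hinv : IsUnit (FB qh).det)
    (r₁ r₂ K : ℝ) (hr₁ : 0 ≤ r₁) (hr₂ : 0 ≤ r₂) (hK : 0 ≤ K)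
    (box : Set (Fin r → ℝ))
    (hbox : box = { q | eNorm (fun j => q (B j) - qh (B j)) ≤ r₁ ∧
                        eNorm (fun j => q (N j) - qh (N j)) ≤ r₂ })
    (hLip : ∀ q ∈ box, ‖FB q - FB qh‖ ≤ K * eNorm (q - qh))
    (v : Fin s → ℝ)
    (hineq : eNorm ((FB qh)⁻¹.mulVec (F qh - v)) +
        ‖(FB qh)⁻¹‖ * (1 / 2 * K * (r₁ + r₂) * r₁ +
          (⨆ q ∈ box, ‖FN q‖) * r₂) ≤ r₁) :
    ∃ qstar ∈ box, F qstar = v := by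
  set A := FB qh
  set b : EuclideanSpace ℝ (Fin s) := toLp 2 (qh ∘ B)
  set G : EuclideanSpace ℝ (Fin s) → EuclideanSpace ℝ (Fin s) :=
    fun x => toLp 2 (A⁻¹ *ᵥ F (extend B (ofLp x) qh))
  have hmem : ∀ z ∈ closedBall b r₁, extend B (ofLp z) qh ∈ box := fun z hz =>
    hbox ▸ extend_mem_coordBox hB hdisj hr₂ hz
  have hG : ∀ z ∈ closedBall b r₁,
      HasFDerivAt G (toEuclideanCLM (𝕜 := ℝ) (A⁻¹ * FB (extend B (ofLp z) qh))) z := fun z _ =>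
    hasFDerivAt_toLp_mulVec_comp_extend hB _ qh (hF.differentiable one_ne_zero _)
      fun i j => by rw [hFB]
  have hG' : ∀ z ∈ closedBall b r₁,
      ‖toEuclideanCLM (𝕜 := ℝ) (A⁻¹ * FB (extend B (ofLp z) qh)) - ContinuousLinearMap.id ℝ _‖ ≤
        ‖A⁻¹‖ * K * ‖z - b‖ := fun z hz => by
    refine (norm_toEuclideanCLM_inv_mul_sub_id_le hinv _).trans ?_
    rw [mul_assoc, ← eNorm_extend_sub_self hB]
    exact mul_le_mul_of_nonneg_left (hLip _ (hmem z hz)) (norm_nonneg _)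
  have hu : ‖toLp 2 (A⁻¹ *ᵥ v) - G b‖ + ‖A⁻¹‖ * K / 2 * r₁ ^ 2 ≤ r₁ := by
    have hS : 0 ≤ ⨆ q ∈ box, ‖FN q‖ :=
      Real.iSup_nonneg fun _ => Real.iSup_nonneg fun _ => norm_nonneg _
    rw [norm_sub_rev, show G b = toLp 2 (A⁻¹ *ᵥ F qh) by simp [G, b, extend_comp_self hB],
      ← toLp_sub, ← mulVec_sub, ← eNorm_eq_norm_toLp]
    nlinarith [mul_nonneg (norm_nonneg A⁻¹) (mul_nonneg (mul_nonneg hK hr₂) hr₁),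
      mul_nonneg (norm_nonneg A⁻¹) (mul_nonneg hS hr₂)]
  obtain ⟨x, hx, hGx⟩ :=
    exists_eq_of_norm_fderiv_sub_id_le (mul_nonneg (norm_nonneg _) hK) hG hG' hu
  exact ⟨_, hmem x hx, mulVec_injective_of_isUnit (isUnit_nonsing_inv_iff.2
    ((isUnit_iff_isUnit_det A).2 hinv)) (toLp_injective 2 hGx)⟩

/-- existence of a solution of an underdetermined system
`F(q) = v` in the set `[q] = {q : ‖q_B − q̂_B‖ ≤ r₁, ‖q_N − q̂_N‖ ≤ r₂}`,
given invertibility of the `B`-columns of the Jacobian at `q̂`, a Lipschitz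
bound on those columns, and the Krawczyk-type norm inequality. -/
theorem underdetermined_existence {r s t : ℕ} (hrs : r = s + t) (hst : s < r)
    (F : (Fin r → ℝ) → (Fin s → ℝ)) (hF : ContDiff ℝ 1 F)
    (qh : Fin r → ℝ)
    (B : Fin s → Fin r) (N : Fin t → Fin r)
    (hB : Function.Injective B) (hN : Function.Injective N)
    (hdisj : Disjoint (Set.range B) (Set.range N))
    (hcover : Set.range B ∪ Set.range N = Set.univ)
    -- the `B`-columns of the Jacobian at `q̂`, and its inverse
    (FB : (Fin r → ℝ) → Matrix (Fin s) (Fin s) ℝ)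
    (hFB : ∀ q, FB q = fun i j => jacMatrix F q i (B j))
    (FN : (Fin r → ℝ) → Matrix (Fin s) (Fin t) ℝ)
    (hFN : ∀ q, FN q = fun i j => jacMatrix F q i (N j))
    (hinv : IsUnit (FB qh).det)
    (r₁ r₂ K : ℝ) (hr₁ : 0 ≤ r₁) (hr₂ : 0 ≤ r₂) (hK : 0 ≤ K)
    (box : Set (Fin r → ℝ))
    (hbox : box = { q | eNorm (fun j => q (B j) - qh (B j)) ≤ r₁ ∧
                        eNorm (fun j => q (N j) - qh (N j)) ≤ r₂ })
    (hLip : ∀ q ∈ box, ‖FB q - FB qh‖ ≤ K * eNorm (q - qh))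
    (v : Fin s → ℝ)
    (hineq : eNorm ((FB qh)⁻¹.mulVec (F qh - v)) +
        ‖(FB qh)⁻¹‖ * (1 / 2 * K * (r₁ + r₂) * r₁ +
          (⨆ q ∈ box, ‖FN q‖) * r₂) ≤ r₁) :
    ∃ qstar ∈ box, F qstar = v :=
  underdetermined_existence_general F hF qh B N hB hdisj FB hFB FN hinv r₁ r₂ K hr₁ hr₂ hK box hbox
    hLip v hineq
end

section
/- Consider a continuous dynamical system ẋ = f(x) on ℝⁿ where f is locally Lipschitz, an initial set Θ ⊆ ℝⁿ, and an unsafe set X_u ⊆ ℝⁿ. Suppose there is a continuously differentiable function φ : ℝⁿ → ℝ such that (i) φ(x) ≥ 0 for all x ∈ Θ, (ii) ∇φ(x)·f(x) > 0 whenever φ(x) ≥ 0, and (iii) φ(x) < 0 for all x ∈ X_u. Then no trajectory of the system starting in Θ ever reaches X_u. -/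
/-!
Along a trajectory `x`, the function `t ↦ φ (x t)` starts nonnegative and has positive derivative
whenever it vanishes, so it can never cross zero; hence it stays nonnegative, while `φ < 0` on the
unsafe set.
-/

open Set

theorem nonneg_of_hasDerivAt_pos_of_eq_zero {g g' : ℝ → ℝ} {a b : ℝ}
    (hg : ∀ t ∈ Icc a b, HasDerivAt g (g' t) t) (ha : 0 ≤ g a)
    (hzero : ∀ t ∈ Icc a b, g t = 0 → 0 < g' t) : ∀ t ∈ Icc a b, 0 ≤ g t :=
  image_le_of_deriv_right_lt_deriv_boundary' continuousOn_const
    (fun _ _ => hasDerivWithinAt_const _ _ _) ha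
    (fun t ht => (hg t ht).continuousAt.continuousWithinAt)
    (fun t ht => (hg t (Ico_subset_Icc_self ht)).hasDerivWithinAt)
    (fun t ht h => hzero t (Ico_subset_Icc_self ht) h.symm)

theorem barrier_nonneg_along_trajectory {E : Type*} [NormedAddCommGroup E] [NormedSpace ℝ E]
    {f : E → E} {φ : E → ℝ} (hφ : Differentiable ℝ φ)
    (hlie : ∀ y, φ y = 0 → 0 < fderiv ℝ φ y (f y))
    {x : ℝ → E} {T : ℝ} (hx : ∀ t ∈ Icc 0 T, HasDerivAt x (f (x t)) t) (hx0 : 0 ≤ φ (x 0)) :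
    ∀ t ∈ Icc 0 T, 0 ≤ φ (x t) :=
  nonneg_of_hasDerivAt_pos_of_eq_zero
    (fun t ht => (hφ (x t)).hasFDerivAt.comp_hasDerivAt t (hx t ht)) hx0
    (fun t _ h => hlie (x t) h)

theorem barrier_certificate_safety_general {n : ℕ}
    (f : (Fin n → ℝ) → (Fin n → ℝ))
    (Θ Xu : Set (Fin n → ℝ))
    (φ : (Fin n → ℝ) → ℝ) (hφ : ContDiff ℝ 1 φ)
    (hinit : ∀ x ∈ Θ, 0 ≤ φ x)
    (hlie : ∀ x : Fin n → ℝ, 0 ≤ φ x → 0 < fderiv ℝ φ x (f x))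
    (hunsafe : ∀ x ∈ Xu, φ x < 0) :
    ∀ (T : ℝ), 0 ≤ T → ∀ x : ℝ → (Fin n → ℝ),
      x 0 ∈ Θ →
      (∀ t ∈ Set.Icc (0 : ℝ) T, HasDerivAt x (f (x t)) t) →
      ∀ t ∈ Set.Icc (0 : ℝ) T, x t ∉ Xu := by
  intro T _ x hx0 hx t ht hunsafe_t
  have hnonneg := barrier_nonneg_along_trajectory (hφ.differentiable one_ne_zero)
    (fun y hy => hlie y hy.ge) hx (hinit _ hx0) t ht
  exact (hunsafe _ hunsafe_t).not_ge hnonneg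

/-- barrier certificate safety theorem (single mode): if
`φ ≥ 0` on the initial set, the Lie derivative `∇φ·f` is positive wherever
`φ ≥ 0`, and `φ < 0` on the unsafe set, then no trajectory starting in the
initial set ever reaches the unsafe set. -/
theorem barrier_certificate_safety {n : ℕ}
    (f : (Fin n → ℝ) → (Fin n → ℝ)) (hf : LocallyLipschitz f)
    (Θ Xu : Set (Fin n → ℝ))
    (φ : (Fin n → ℝ) → ℝ) (hφ : ContDiff ℝ 1 φ)
    (hinit : ∀ x ∈ Θ, 0 ≤ φ x)
    (hlie : ∀ x : Fin n → ℝ, 0 ≤ φ x → 0 < fderiv ℝ φ x (f x))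
    (hunsafe : ∀ x ∈ Xu, φ x < 0) :
    ∀ (T : ℝ), 0 ≤ T → ∀ x : ℝ → (Fin n → ℝ),
      x 0 ∈ Θ →
      (∀ t ∈ Set.Icc (0 : ℝ) T, HasDerivAt x (f (x t)) t) →
      ∀ t ∈ Set.Icc (0 : ℝ) T, x t ∉ Xu :=
  barrier_certificate_safety_general f Θ Xu φ hφ hinit hlie hunsafe
end
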